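/- arXiv:2507.18991 — 2 statements merged into one kernel-verified Lean document; each statement's English description precedes it below -/
import Mathlib

section
/- Let u be a harmonic function on the unit ball B₁ ⊂ ℝⁿ, let a > 1 and let r ∈ (0,1). Then for every φ ∈ C_c^∞(B_r ∖ Z(u)) the Hardy-type inequality ((a−1)/2)² ∫_{B_r} |u|^{a−2} |∇u|² φ² dx ≤ ∫_{B_r} |u|^a |∇φ|² dx holds. -/
open MeasureTheory Metric Filter InnerProductSpace



lemma fderiv_eq_zero_of_eventually_zero {E' : Type*} [NormedAddCommGroup E'] [NormedSpace ℝ E']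
    {f : E' → ℝ} {x : E'} (h : ∀ᶠ y in nhds x, f y = 0) :
    fderiv ℝ f x = 0 := by
  have h' : f =ᶠ[nhds x] (fun _ => (0 : ℝ)) := h
  rw [h'.fderiv_eq]
  exact fderiv_const_apply 0

lemma euclid_abs_coord_le {m : ℕ} (x : EuclideanSpace ℝ (Fin m)) (j : Fin m) :
    |x j| ≤ ‖x‖ := by
  rw [EuclideanSpace.norm_eq]
  have h1 : |x j| ^ 2 ≤ ∑ i, |x i| ^ 2 :=
    Finset.single_le_sum (f := fun i => |x i| ^ 2) (fun i _ => sq_nonneg _) (Finset.mem_univ j)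
  calc |x j| = Real.sqrt (|x j| ^ 2) := by rw [Real.sqrt_sq (abs_nonneg _)]
    _ ≤ _ := Real.sqrt_le_sqrt h1

lemma integral_divergence_zero {m : ℕ}
    (f : Fin (m + 1) → EuclideanSpace ℝ (Fin (m + 1)) → ℝ)
    (hd : ∀ i x, DifferentiableAt ℝ (f i) x)
    (hcont : Continuous fun x => ∑ i, fderiv ℝ (f i) x (EuclideanSpace.single i 1))
    {K : Set (EuclideanSpace ℝ (Fin (m + 1)))} (hK : IsCompact K)
    (hsupp : ∀ i, ∀ x ∉ K, f i x = 0) :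
    ∫ x, ∑ i, fderiv ℝ (f i) x (EuclideanSpace.single i 1) = 0 := by
  classical
  have hKc : IsClosed K := hK.isClosed
  have hfd0 : ∀ i, ∀ x ∉ K, fderiv ℝ (f i) x = 0 := by
    intro i x hx
    apply fderiv_eq_zero_of_eventually_zero
    filter_upwards [hKc.isOpen_compl.mem_nhds hx] with y hy using hsupp i y hy
  obtain ⟨C, hC0, hC⟩ : ∃ C : ℝ, 0 ≤ C ∧ ∀ x ∈ K, ‖x‖ ≤ C := by
    obtain ⟨C, hC⟩ := hK.isBounded.subset_closedBall 0
    refine ⟨max C 0, le_max_right _ _, fun x hx => ?_⟩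
    have h1 : ‖x‖ ≤ C := by simpa [dist_eq_norm] using hC hx
    exact h1.trans (le_max_left _ _)
  set a : Fin (m + 1) → ℝ := fun _ => -(C + 1) with ha
  set b : Fin (m + 1) → ℝ := fun _ => C + 1 with hb
  have hle : a ≤ b := fun i => by simp [ha, hb]; linarith
  set eL : EuclideanSpace ℝ (Fin (m + 1)) ≃L[ℝ] (Fin (m + 1) → ℝ) :=
    EuclideanSpace.equiv (Fin (m + 1)) ℝ with heL
  have hout : ∀ y : Fin (m + 1) → ℝ, y ∉ Set.Icc a b → eL.symm y ∉ K := by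
    intro y hy hmem
    apply hy
    constructor <;> intro j
    · have h2 := (euclid_abs_coord_le (eL.symm y) j).trans (hC _ hmem)
      have hyj : (eL.symm y) j = y j := rfl
      rw [hyj] at h2
      have h3 := abs_le.1 h2
      simp only [ha]; linarith [h3.1]
    · have h2 := (euclid_abs_coord_le (eL.symm y) j).trans (hC _ hmem)
      have hyj : (eL.symm y) j = y j := rfl
      rw [hyj] at h2
      have h3 := abs_le.1 h2
      simp only [hb]; linarith [h3.2]
  set D : EuclideanSpace ℝ (Fin (m + 1)) → ℝ :=
    fun x => ∑ i, fderiv ℝ (f i) x (EuclideanSpace.single i 1) with hD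
  have hmp : MeasurePreserving (MeasurableEquiv.toLp 2 (Fin (m + 1) → ℝ))
      volume volume := (EuclideanSpace.volume_preserving_symm_measurableEquiv_toLp _).symm
  have hcoe : ⇑(MeasurableEquiv.toLp 2 (Fin (m + 1) → ℝ)) = ⇑eL.symm := rfl
  have step1 : ∫ x, D x = ∫ y : Fin (m + 1) → ℝ, D (eL.symm y) := by
    rw [← hmp.integral_comp (MeasurableEquiv.toLp 2 (Fin (m + 1) → ℝ)).measurableEmbedding D, hcoe]
  have hDout : ∀ y ∉ Set.Icc a b, D (eL.symm y) = 0 := by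
    intro y hy
    have hout' := hout y hy
    simp only [hD]
    rw [Finset.sum_eq_zero]
    intro i _
    rw [hfd0 i _ hout']
    rfl
  have step2 : ∫ y : Fin (m + 1) → ℝ, D (eL.symm y) = ∫ y in Set.Icc a b, D (eL.symm y) :=
    (setIntegral_eq_integral_of_forall_compl_eq_zero hDout).symm
  have hsingle : ∀ i : Fin (m + 1), eL.symm (Pi.single i 1) = EuclideanSpace.single i 1 := by
    intro i; rfl
  have hfderiv : ∀ (i) (y : Fin (m + 1) → ℝ), HasFDerivAt (fun z => f i (eL.symm z))
      ((fderiv ℝ (f i) (eL.symm y)).comp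
        (eL.symm : (Fin (m + 1) → ℝ) →L[ℝ] EuclideanSpace ℝ (Fin (m + 1)))) y :=
    fun i y => ((hd i (eL.symm y)).hasFDerivAt).comp y eL.symm.hasFDerivAt
  have key := MeasureTheory.integral_divergence_of_hasFDerivAt_off_countable' a b hle
    (fun i z => f i (eL.symm z))
    (fun i y => (fderiv ℝ (f i) (eL.symm y)).comp
        (eL.symm : (Fin (m + 1) → ℝ) →L[ℝ] EuclideanSpace ℝ (Fin (m + 1))))
    ∅ Set.countable_empty
    (fun i => by
      refine Continuous.continuousOn ?_
      refine Continuous.comp ?_ eL.symm.continuous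
      exact continuous_iff_continuousAt.2 fun x => (hd i x).continuousAt)
    (fun x _ i => hfderiv i x)
    (by
      have heq : (fun y : Fin (m+1) → ℝ => ∑ i, ((fderiv ℝ (f i) (eL.symm y)).comp
          (eL.symm : (Fin (m + 1) → ℝ) →L[ℝ] EuclideanSpace ℝ (Fin (m + 1)))) (Pi.single i 1))
          = fun y => D (eL.symm y) := by
        funext y
        simp only [ContinuousLinearMap.comp_apply, hD]
        exact Finset.sum_congr rfl fun i _ => by rw [ContinuousLinearEquiv.coe_coe, hsingle i]
      rw [heq]
      exact ((hcont.comp eL.symm.continuous).continuousOn).integrableOn_compact isCompact_Icc)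
  have hfaces : ∀ i : Fin (m + 1),
      ((∫ x in Set.Icc (a ∘ i.succAbove) (b ∘ i.succAbove),
          f i (eL.symm (i.insertNth (b i) x))) -
        ∫ x in Set.Icc (a ∘ i.succAbove) (b ∘ i.succAbove),
          f i (eL.symm (i.insertNth (a i) x))) = 0 := by
    intro i
    have hfront : ∀ x : Fin m → ℝ, f i (eL.symm (i.insertNth (b i) x)) = 0 := by
      intro x
      apply hsupp
      intro hmem
      have h1 := (hC _ hmem)
      have h2 := (euclid_abs_coord_le (eL.symm (i.insertNth (b i) x)) i).trans h1
      have h3 : (eL.symm (i.insertNth (b i) x)) i = b i := by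
        change (i.insertNth (b i) x : Fin (m+1) → ℝ) i = b i
        simp
      rw [h3] at h2
      simp only [hb, abs_of_nonneg (by linarith : (0:ℝ) ≤ C + 1)] at h2
      linarith
    have hback : ∀ x : Fin m → ℝ, f i (eL.symm (i.insertNth (a i) x)) = 0 := by
      intro x
      apply hsupp
      intro hmem
      have h1 := (hC _ hmem)
      have h2 := (euclid_abs_coord_le (eL.symm (i.insertNth (a i) x)) i).trans h1
      have h3 : (eL.symm (i.insertNth (a i) x)) i = a i := by
        change (i.insertNth (a i) x : Fin (m+1) → ℝ) i = a i
        simp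
      rw [h3] at h2
      simp only [ha, abs_neg, abs_of_nonneg (by linarith : (0:ℝ) ≤ C + 1)] at h2
      linarith
    simp only [hfront, hback, integral_zero, sub_zero]
  show ∫ x, D x = 0
  rw [step1, step2]
  have heq2 : (fun y : Fin (m + 1) → ℝ => D (eL.symm y)) = fun y =>
      ∑ i, ((fderiv ℝ (f i) (eL.symm y)).comp
        (eL.symm : (Fin (m + 1) → ℝ) →L[ℝ] EuclideanSpace ℝ (Fin (m + 1)))) (Pi.single i 1) := by
    funext y
    simp only [ContinuousLinearMap.comp_apply, hD]
    exact Finset.sum_congr rfl fun i _ => by rw [ContinuousLinearEquiv.coe_coe, hsingle i]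
  rw [heq2, key]
  exact Finset.sum_eq_zero fun i _ => hfaces i


lemma h_eventually_pos (a : ℝ) {t : ℝ} (ht : 0 < t) :
    (fun s => |s| ^ (a - 2) * s) =ᶠ[nhds t] fun s => s ^ (a - 1) := by
  filter_upwards [Ioi_mem_nhds ht] with s hs
  have hs' : (0:ℝ) < s := hs
  rw [abs_of_pos hs']
  rw [show a - 1 = (a - 2) + 1 by ring, Real.rpow_add hs', Real.rpow_one]

lemma h_eventually_neg (a : ℝ) {t : ℝ} (ht : t < 0) :
    (fun s => |s| ^ (a - 2) * s) =ᶠ[nhds t] fun s => -((-s) ^ (a - 1)) := by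
  filter_upwards [Iio_mem_nhds ht] with s hs
  have hs' : (0:ℝ) < -s := by simpa using hs
  rw [abs_of_neg hs]
  rw [show a - 1 = (a - 2) + 1 by ring, Real.rpow_add hs', Real.rpow_one]
  ring

lemma h_hasDerivAt (a : ℝ) {t : ℝ} (ht : t ≠ 0) :
    HasDerivAt (fun s => |s| ^ (a - 2) * s) ((a - 1) * |t| ^ (a - 2)) t := by
  rcases ht.lt_or_gt with h | h
  · have h1 : HasDerivAt (fun s : ℝ => -s) (-1) t := (hasDerivAt_id t).neg
    have h2 : HasDerivAt (fun y : ℝ => y ^ (a - 1)) ((a - 1) * (-t) ^ (a - 1 - 1)) (-t) :=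
      Real.hasDerivAt_rpow_const (Or.inl (by linarith))
    have h3 : HasDerivAt (fun s : ℝ => (-s) ^ (a - 1)) ((a - 1) * (-t) ^ (a - 1 - 1) * (-1)) t :=
      h2.comp t h1
    have h4 := h3.neg
    have h5 : -((a - 1) * (-t) ^ (a - 1 - 1) * (-1)) = (a - 1) * |t| ^ (a - 2) := by
      rw [abs_of_neg h]; ring_nf
    rw [h5] at h4
    exact h4.congr_of_eventuallyEq (h_eventually_neg a h)
  · have h2 : HasDerivAt (fun y : ℝ => y ^ (a - 1)) ((a - 1) * t ^ (a - 1 - 1)) t :=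
      Real.hasDerivAt_rpow_const (Or.inl (ne_of_gt h))
    have h5 : (a - 1) * t ^ (a - 1 - 1) = (a - 1) * |t| ^ (a - 2) := by
      rw [abs_of_pos h]; ring_nf
    rw [h5] at h2
    exact h2.congr_of_eventuallyEq (h_eventually_pos a h)

lemma h_contDiffAt (a : ℝ) {t : ℝ} (ht : t ≠ 0) :
    ContDiffAt ℝ 1 (fun s => |s| ^ (a - 2) * s) t := by
  rcases ht.lt_or_gt with h | h
  · have h1 : ContDiffAt ℝ 1 (fun y : ℝ => y ^ (a - 1)) (-t) :=
      Real.contDiffAt_rpow_const_of_ne (by linarith)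
    have h2 : ContDiffAt ℝ 1 (fun s : ℝ => -((-s) ^ (a - 1))) t :=
      (h1.comp t (contDiff_neg.contDiffAt)).neg
    exact h2.congr_of_eventuallyEq (h_eventually_neg a h)
  · have h1 : ContDiffAt ℝ 1 (fun y : ℝ => y ^ (a - 1)) t :=
      Real.contDiffAt_rpow_const_of_ne (ne_of_gt h)
    exact h1.congr_of_eventuallyEq (h_eventually_pos a h)

lemma fderiv_apply_single' {m : ℕ} (w : EuclideanSpace ℝ (Fin m) → ℝ)
    (x : EuclideanSpace ℝ (Fin m)) (v : EuclideanSpace ℝ (Fin m)) :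
    fderiv ℝ w x v = ⟪gradient w x, v⟫_ℝ := by
  rw [gradient]
  exact (toDual_symm_apply).symm

lemma fderiv_apply_single {m : ℕ} (w : EuclideanSpace ℝ (Fin m) → ℝ)
    (x : EuclideanSpace ℝ (Fin m)) (i : Fin m) :
    fderiv ℝ w x (EuclideanSpace.single i 1) = gradient w x i := by
  rw [fderiv_apply_single', EuclideanSpace.inner_single_right]
  simp

lemma sum_fderiv_mul {m : ℕ} (w v : EuclideanSpace ℝ (Fin m) → ℝ)
    (x : EuclideanSpace ℝ (Fin m)) :
    ∑ i, fderiv ℝ w x (EuclideanSpace.single i 1) * fderiv ℝ v x (EuclideanSpace.single i 1) =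
      ⟪gradient w x, gradient v x⟫_ℝ := by
  rw [PiLp.inner_apply]
  exact Finset.sum_congr rfl fun i _ => by
    rw [fderiv_apply_single, fderiv_apply_single]; simp [mul_comm]


set_option maxHeartbeats 2000000 in
theorem hardy_succ (m : ℕ)
    (u : EuclideanSpace ℝ (Fin (m+1)) → ℝ)
    (hu : ContDiffOn ℝ 2 u (ball (0 : EuclideanSpace ℝ (Fin (m+1))) 1))
    (hlapl : ∀ x ∈ ball (0 : EuclideanSpace ℝ (Fin (m+1))) 1,
      (∑ i, fderiv ℝ (fun y => fderiv ℝ u y (EuclideanSpace.single i 1)) x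
        (EuclideanSpace.single i 1)) = 0)
    (a : ℝ) (ha : 1 < a) (r : ℝ) (hr0 : 0 < r) (hr1 : r < 1)
    (φ : EuclideanSpace ℝ (Fin (m+1)) → ℝ)
    (hφ : ContDiff ℝ (⊤ : ℕ∞) φ) (hφc : HasCompactSupport φ)
    (hφs : tsupport φ ⊆ ball (0 : EuclideanSpace ℝ (Fin (m+1))) r \ {x | u x = 0}) :
    ((a - 1) / 2) ^ 2 *
        ∫ x in ball (0 : EuclideanSpace ℝ (Fin (m+1))) r,
          |u x| ^ (a - 2) * ‖gradient u x‖ ^ 2 * (φ x) ^ 2 ≤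
      ∫ x in ball (0 : EuclideanSpace ℝ (Fin (m+1))) r, |u x| ^ a * ‖gradient φ x‖ ^ 2 := by
  have ha1 : (0:ℝ) < a - 1 := by linarith
  set Ω : Set (EuclideanSpace ℝ (Fin (m+1))) := ball 0 1 ∩ {x | u x ≠ 0} with hΩdef
  have hΩo : IsOpen Ω := by
    have h : {x : EuclideanSpace ℝ (Fin (m+1)) | u x ≠ 0} = u ⁻¹' ({0}ᶜ) := rfl
    rw [hΩdef, h]
    exact (hu.continuousOn).isOpen_inter_preimage isOpen_ball isOpen_compl_singleton
  have hKsub : tsupport φ ⊆ Ω := by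
    intro x hx
    obtain ⟨h1, h2⟩ := hφs hx
    exact ⟨ball_subset_ball hr1.le h1, h2⟩
  have hKr : tsupport φ ⊆ ball (0 : EuclideanSpace ℝ (Fin (m+1))) r := fun x hx => (hφs hx).1
  have hu2 : ∀ x ∈ Ω, ContDiffAt ℝ 2 u x := fun x hx =>
    hu.contDiffAt (isOpen_ball.mem_nhds hx.1)
  have hud : ∀ x ∈ Ω, DifferentiableAt ℝ u x := fun x hx =>
    (hu2 x hx).differentiableAt two_ne_zero
  have hdu1 : ∀ x ∈ Ω, ContDiffAt ℝ 1 (fderiv ℝ u) x := fun x hx =>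
    (hu2 x hx).fderiv_right (le_refl 2)
  have hφd : Differentiable ℝ φ := hφ.differentiable (by simp)
  obtain ⟨f, hfdef⟩ : ∃ f : Fin (m + 1) → EuclideanSpace ℝ (Fin (m+1)) → ℝ,
      f = fun i x =>
        (φ x * φ x) * ((|u x| ^ (a - 2) * u x) * fderiv ℝ u x (EuclideanSpace.single i 1)) :=
    ⟨_, rfl⟩
  have hfzero : ∀ i, ∀ x ∉ tsupport φ, f i x = 0 := by
    intro i x hx
    simp [hfdef, image_eq_zero_of_notMem_tsupport hx]
  have hfzero' : ∀ i x, x ∉ tsupport φ → fderiv ℝ (f i) x = 0 := by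
    intro i x hx
    apply fderiv_eq_zero_of_eventually_zero
    filter_upwards [(hφc.isClosed.isOpen_compl).mem_nhds hx] with y hy using hfzero i y hy
  have hC : ∀ (i : Fin (m + 1)), ∀ x ∈ Ω,
      ContDiffAt ℝ 1 (fun y => fderiv ℝ u y (EuclideanSpace.single i 1)) x := by
    intro i x hx
    exact (ContinuousLinearMap.apply ℝ ℝ
      (EuclideanSpace.single i 1)).contDiff.comp_contDiffAt x (hdu1 x hx)
  have hB : ∀ x ∈ Ω, HasFDerivAt (fun y => |u y| ^ (a - 2) * u y)
      (((a - 1) * |u x| ^ (a - 2)) • fderiv ℝ u x) x := fun x hx =>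
    (h_hasDerivAt a hx.2).comp_hasFDerivAt x (hud x hx).hasFDerivAt
  have hfi : ∀ i, ∀ x ∈ Ω, HasFDerivAt (f i)
      ((φ x * φ x) •
        ((|u x| ^ (a - 2) * u x) •
            (fderiv ℝ (fun y => fderiv ℝ u y (EuclideanSpace.single i 1)) x) +
          (fderiv ℝ u x (EuclideanSpace.single i 1)) •
            (((a - 1) * |u x| ^ (a - 2)) • fderiv ℝ u x)) +
        ((|u x| ^ (a - 2) * u x) * fderiv ℝ u x (EuclideanSpace.single i 1)) •
          (φ x • fderiv ℝ φ x + φ x • fderiv ℝ φ x)) x := by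
    intro i x hx
    rw [hfdef]
    exact ((hφd x).hasFDerivAt.mul (hφd x).hasFDerivAt).mul
      ((hB x hx).mul ((hC i x hx).differentiableAt one_ne_zero).hasFDerivAt)
  have hdiffall : ∀ i x, DifferentiableAt ℝ (f i) x := by
    intro i x
    by_cases hx : x ∈ tsupport φ
    · exact (hfi i x (hKsub hx)).differentiableAt
    · have hev : f i =ᶠ[nhds x] fun _ => (0:ℝ) := by
        filter_upwards [(hφc.isClosed.isOpen_compl).mem_nhds hx] with y hy using hfzero i y hy
      exact hev.differentiableAt_iff.2 (differentiableAt_const 0)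
  have hkey : ∀ i, ∀ x ∈ Ω, fderiv ℝ (f i) x (EuclideanSpace.single i 1) =
      (φ x * φ x * (|u x| ^ (a - 2) * u x)) *
        (fderiv ℝ (fun y => fderiv ℝ u y (EuclideanSpace.single i 1)) x
          (EuclideanSpace.single i 1)) +
      (φ x * φ x * ((a - 1) * |u x| ^ (a - 2))) *
        (fderiv ℝ u x (EuclideanSpace.single i 1) * fderiv ℝ u x (EuclideanSpace.single i 1)) +
      (2 * φ x * (|u x| ^ (a - 2) * u x)) *
        (fderiv ℝ φ x (EuclideanSpace.single i 1) * fderiv ℝ u x (EuclideanSpace.single i 1))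
      := by
    intro i x hx
    rw [(hfi i x hx).fderiv]
    simp only [ContinuousLinearMap.add_apply, ContinuousLinearMap.smul_apply, smul_eq_mul]
    ring
  obtain ⟨G₁, hG₁def⟩ : ∃ g : EuclideanSpace ℝ (Fin (m+1)) → ℝ,
      g = fun x => |u x| ^ (a - 2) * ‖gradient u x‖ ^ 2 * φ x ^ 2 := ⟨_, rfl⟩
  obtain ⟨G₂, hG₂def⟩ : ∃ g : EuclideanSpace ℝ (Fin (m+1)) → ℝ,
      g = fun x => |u x| ^ a * ‖gradient φ x‖ ^ 2 := ⟨_, rfl⟩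
  obtain ⟨P, hPdef⟩ : ∃ g : EuclideanSpace ℝ (Fin (m+1)) → ℝ,
      g = fun x => φ x * ((|u x| ^ (a - 2) * u x) * ⟪gradient φ x, gradient u x⟫_ℝ) :=
    ⟨_, rfl⟩
  have hgradφ0 : ∀ x ∉ tsupport φ, gradient φ x = 0 := by
    intro x hx
    have h0 : fderiv ℝ φ x = 0 := by
      by_contra h
      exact hx (support_fderiv_subset ℝ (f := φ) h)
    rw [gradient, h0]
    simp
  have hDform : ∀ x, (∑ i, fderiv ℝ (f i) x (EuclideanSpace.single i 1)) =
      2 * P x + (a - 1) * G₁ x := by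
    intro x
    by_cases hx : x ∈ tsupport φ
    · have hxΩ := hKsub hx
      have hlap := hlapl x hxΩ.1
      calc ∑ i, fderiv ℝ (f i) x (EuclideanSpace.single i 1)
          = ∑ i : Fin (m+1), ((φ x * φ x * (|u x| ^ (a - 2) * u x)) *
              (fderiv ℝ (fun y => fderiv ℝ u y (EuclideanSpace.single i 1)) x
                (EuclideanSpace.single i 1)) +
            (φ x * φ x * ((a - 1) * |u x| ^ (a - 2))) *
              (fderiv ℝ u x (EuclideanSpace.single i 1) *
                fderiv ℝ u x (EuclideanSpace.single i 1)) +
            (2 * φ x * (|u x| ^ (a - 2) * u x)) *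
              (fderiv ℝ φ x (EuclideanSpace.single i 1) *
                fderiv ℝ u x (EuclideanSpace.single i 1))) :=
            Finset.sum_congr rfl fun i _ => hkey i x hxΩ
        _ = (φ x * φ x * (|u x| ^ (a - 2) * u x)) *
              (∑ i, fderiv ℝ (fun y => fderiv ℝ u y (EuclideanSpace.single i 1)) x
                (EuclideanSpace.single i 1)) +
            (φ x * φ x * ((a - 1) * |u x| ^ (a - 2))) * ⟪gradient u x, gradient u x⟫_ℝ +
            (2 * φ x * (|u x| ^ (a - 2) * u x)) * ⟪gradient φ x, gradient u x⟫_ℝ := by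
            rw [← sum_fderiv_mul u u x, ← sum_fderiv_mul φ u x]
            simp only [Finset.sum_add_distrib, ← Finset.mul_sum]
        _ = 2 * P x + (a - 1) * G₁ x := by
            rw [hlap, real_inner_self_eq_norm_sq]
            simp only [hPdef, hG₁def]
            ring
    · have hφx : φ x = 0 := image_eq_zero_of_notMem_tsupport hx
      have hz : ∀ i : Fin (m+1), fderiv ℝ (f i) x (EuclideanSpace.single i 1) = 0 := by
        intro i; rw [hfzero' i x hx]; rfl
      simp only [hz, Finset.sum_const, smul_eq_mul, mul_zero, hPdef, hG₁def, hφx]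
      ring
  -- C¹ regularity of f i on Ω, and continuity of the divergence
  have hfC1 : ∀ i, ContDiffOn ℝ 1 (f i) Ω := by
    intro i x hx
    have hφ1 : ContDiffAt ℝ 1 φ x := (hφ.of_le (by simp)).contDiffAt
    have hu1 : ContDiffAt ℝ 1 u x := (hu2 x hx).of_le one_le_two
    have hB1 : ContDiffAt ℝ 1 (fun y => |u y| ^ (a - 2) * u y) x :=
      (h_contDiffAt a hx.2).comp x hu1
    rw [hfdef]
    exact ((hφ1.mul hφ1).mul (hB1.mul (hC i x hx))).contDiffWithinAt
  have hDcont : Continuous (fun x => ∑ i, fderiv ℝ (f i) x (EuclideanSpace.single i 1)) := by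
    rw [continuous_iff_continuousAt]
    intro x
    by_cases hx : x ∈ tsupport φ
    · have hΩx := hKsub hx
      have hcΩ : ContinuousOn
          (fun x => ∑ i, fderiv ℝ (f i) x (EuclideanSpace.single i 1)) Ω := by
        apply continuousOn_finset_sum
        intro i _
        exact (ContinuousLinearMap.apply ℝ ℝ
          (EuclideanSpace.single i 1)).continuous.comp_continuousOn
          ((hfC1 i).continuousOn_fderiv_of_isOpen hΩo le_rfl)
      exact hcΩ.continuousAt (hΩo.mem_nhds hΩx)
    · have hev : (fun _ => (0:ℝ)) =ᶠ[nhds x]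
          (fun x => ∑ i, fderiv ℝ (f i) x (EuclideanSpace.single i 1)) := by
        filter_upwards [(hφc.isClosed.isOpen_compl).mem_nhds hx] with y hy
        exact (Finset.sum_eq_zero fun i _ => by rw [hfzero' i y hy]; rfl).symm
      exact continuousAt_const.congr hev
  -- continuity of the gradients
  have hgradu_cont : ContinuousOn (gradient u) Ω := by
    have h0 : ContDiffOn ℝ 1 (fderiv ℝ u)
        (ball (0 : EuclideanSpace ℝ (Fin (m+1))) 1) :=
      hu.fderiv_of_isOpen isOpen_ball (by norm_num)
    have h1 : ContinuousOn (fderiv ℝ u)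
        (ball (0 : EuclideanSpace ℝ (Fin (m+1))) 1) := h0.continuousOn
    exact (InnerProductSpace.toDual ℝ
      (EuclideanSpace ℝ (Fin (m+1)))).symm.continuous.comp_continuousOn
      (h1.mono Set.inter_subset_left)
  have hgradφ_cont : Continuous (gradient φ) :=
    (InnerProductSpace.toDual ℝ
      (EuclideanSpace ℝ (Fin (m+1)))).symm.continuous.comp (hφ.continuous_fderiv (by simp))
  -- continuity of integrands
  have hG₁cont : Continuous G₁ := by
    rw [hG₁def, continuous_iff_continuousAt]
    intro x
    by_cases hx : x ∈ tsupport φ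
    · have hΩx := hKsub hx
      have c1 : ContinuousAt (fun y => |u y| ^ (a - 2)) x :=
        ((hud x hΩx).continuousAt.abs).rpow_const (Or.inl (abs_ne_zero.2 hΩx.2))
      have c2 : ContinuousAt (fun y => ‖gradient u y‖ ^ 2) x :=
        ((hgradu_cont.continuousAt (hΩo.mem_nhds hΩx)).norm).pow 2
      have c3 : ContinuousAt (fun y => φ y ^ 2) x := ((hφ.continuous).continuousAt).pow 2
      exact (c1.mul c2).mul c3
    · have hev : (fun _ => (0:ℝ)) =ᶠ[nhds x]
          (fun x => |u x| ^ (a - 2) * ‖gradient u x‖ ^ 2 * φ x ^ 2) := by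
        filter_upwards [(hφc.isClosed.isOpen_compl).mem_nhds hx] with y hy
        simp [hG₁def, image_eq_zero_of_notMem_tsupport hy]
      exact continuousAt_const.congr hev
  have hG₂cont : Continuous G₂ := by
    rw [hG₂def, continuous_iff_continuousAt]
    intro x
    by_cases hx : x ∈ tsupport φ
    · have hΩx := hKsub hx
      have c1 : ContinuousAt (fun y => |u y| ^ a) x :=
        ((hud x hΩx).continuousAt.abs).rpow_const (Or.inr (by linarith))
      have c2 : ContinuousAt (fun y => ‖gradient φ y‖ ^ 2) x :=
        ((hgradφ_cont.continuousAt).norm).pow 2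
      exact c1.mul c2
    · have hev : (fun _ => (0:ℝ)) =ᶠ[nhds x]
          (fun x => |u x| ^ a * ‖gradient φ x‖ ^ 2) := by
        filter_upwards [(hφc.isClosed.isOpen_compl).mem_nhds hx] with y hy
        simp [hG₂def, hgradφ0 y hy]
      exact continuousAt_const.congr hev
  have hPcont : Continuous P := by
    rw [hPdef, continuous_iff_continuousAt]
    intro x
    by_cases hx : x ∈ tsupport φ
    · have hΩx := hKsub hx
      have c1 : ContinuousAt (fun y => |u y| ^ (a - 2)) x :=
        ((hud x hΩx).continuousAt.abs).rpow_const (Or.inl (abs_ne_zero.2 hΩx.2))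
      have c2 : ContinuousAt (fun y => ⟪gradient φ y, gradient u y⟫_ℝ) x :=
        (hgradφ_cont.continuousAt).inner (hgradu_cont.continuousAt (hΩo.mem_nhds hΩx))
      exact ((hφ.continuous).continuousAt).mul ((c1.mul (hud x hΩx).continuousAt).mul c2)
    · have hev : (fun _ => (0:ℝ)) =ᶠ[nhds x]
          (fun x => φ x * ((|u x| ^ (a - 2) * u x) * ⟪gradient φ x, gradient u x⟫_ℝ)) := by
        filter_upwards [(hφc.isClosed.isOpen_compl).mem_nhds hx] with y hy
        simp [hPdef, image_eq_zero_of_notMem_tsupport hy]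
      exact continuousAt_const.congr hev
  -- integrability
  have hG₁int : Integrable G₁ :=
    hG₁cont.integrable_of_hasCompactSupport (HasCompactSupport.intro hφc
      (fun x hx => by simp [hG₁def, image_eq_zero_of_notMem_tsupport hx]))
  have hG₂int : Integrable G₂ :=
    hG₂cont.integrable_of_hasCompactSupport (HasCompactSupport.intro hφc
      (fun x hx => by simp [hG₂def, hgradφ0 x hx]))
  have hPint : Integrable P :=
    hPcont.integrable_of_hasCompactSupport (HasCompactSupport.intro hφc
      (fun x hx => by simp [hPdef, image_eq_zero_of_notMem_tsupport hx]))
  -- divergence theorem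
  have hdiv0 : ∫ x, (∑ i, fderiv ℝ (f i) x (EuclideanSpace.single i 1)) = 0 :=
    integral_divergence_zero f hdiffall hDcont hφc hfzero
  have hsum : ∫ x, (2 * P x + (a - 1) * G₁ x) = 0 := by
    rw [← hdiv0]
    exact integral_congr_ae (Filter.Eventually.of_forall fun x => (hDform x).symm)
  rw [integral_add (hPint.const_mul 2) (hG₁int.const_mul (a-1)),
    integral_const_mul, integral_const_mul] at hsum
  -- pointwise Cauchy–Schwarz / AM-GM bound
  have hpoint : ∀ x, 2 * (-(P x)) ≤ ((a-1)/2) * G₁ x + (2/(a-1)) * G₂ x := by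
    intro x
    by_cases hx : x ∈ tsupport φ
    · have hΩx := hKsub hx
      have hupos : 0 < |u x| := abs_pos.2 hΩx.2
      have hPabs : |P x| ≤ |φ x| * (|u x| ^ (a - 1) *
          (‖gradient φ x‖ * ‖gradient u x‖)) := by
        have h1 : |P x| = |φ x| * (|(|u x| ^ (a - 2) * u x)| *
            |⟪gradient φ x, gradient u x⟫_ℝ|) := by
          simp [hPdef, abs_mul]
        rw [h1]
        have h2 : |(|u x| ^ (a - 2) * u x)| = |u x| ^ (a - 1) := by
          rw [abs_mul, abs_of_nonneg (Real.rpow_nonneg (abs_nonneg _) _),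
            show a - 1 = (a - 2) + 1 by ring, Real.rpow_add hupos, Real.rpow_one]
        rw [h2]
        exact mul_le_mul_of_nonneg_left (mul_le_mul_of_nonneg_left
          (abs_real_inner_le_norm _ _) (Real.rpow_nonneg (abs_nonneg _) _)) (abs_nonneg _)
      obtain ⟨A, hAv⟩ : ∃ A : ℝ, A = |u x| ^ ((a-2)/2) * ‖gradient u x‖ * |φ x| := ⟨_, rfl⟩
      obtain ⟨B, hBv⟩ : ∃ B : ℝ, B = |u x| ^ (a/2) * ‖gradient φ x‖ := ⟨_, rfl⟩
      have hAB : |φ x| * (|u x| ^ (a - 1) * (‖gradient φ x‖ * ‖gradient u x‖)) = A * B := by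
        rw [hAv, hBv, show (a:ℝ) - 1 = (a-2)/2 + a/2 by ring, Real.rpow_add hupos]
        ring
      have hyA : (|u x| ^ ((a-2)/2)) ^ (2:ℕ) = |u x| ^ (a - 2) := by
        rw [← Real.rpow_natCast (|u x| ^ ((a-2)/2)) 2, ← Real.rpow_mul (abs_nonneg _)]
        congr 1
        push_cast
        ring
      have hyB : (|u x| ^ (a/2)) ^ (2:ℕ) = |u x| ^ a := by
        rw [← Real.rpow_natCast (|u x| ^ (a/2)) 2, ← Real.rpow_mul (abs_nonneg _)]
        congr 1
        push_cast
        ring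
      have hA2 : A ^ 2 = G₁ x := by
        have : A ^ 2 = (|u x| ^ ((a-2)/2)) ^ (2:ℕ) * (‖gradient u x‖ ^ 2 * |φ x| ^ 2) := by
          rw [hAv]; ring
        rw [this, hyA, sq_abs]
        simp only [hG₁def]
        ring
      have hB2 : B ^ 2 = G₂ x := by
        have : B ^ 2 = (|u x| ^ (a/2)) ^ (2:ℕ) * ‖gradient φ x‖ ^ 2 := by
          rw [hBv]; ring
        rw [this, hyB, hG₂def]
      have habs2 : 2 * (-(P x)) ≤ 2 * (A * B) := by
        have h3 : -(P x) ≤ |P x| := neg_le_abs _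
        rw [hAB] at hPabs
        linarith
      have hfs : ((a-1)/2) * A^2 + (2/(a-1)) * B^2 - 2*(A*B) =
          (2/(a-1)) * (((a-1)/2)*A - B)^2 := by
        have hne : a - 1 ≠ 0 := ne_of_gt ha1
        field_simp
        ring
      have h5 : 0 ≤ (2/(a-1)) * (((a-1)/2)*A - B)^2 := by positivity
      calc 2 * (-(P x)) ≤ 2 * (A * B) := habs2
        _ ≤ ((a-1)/2) * A^2 + (2/(a-1)) * B^2 := by linarith
        _ = ((a-1)/2) * G₁ x + (2/(a-1)) * G₂ x := by rw [hA2, hB2]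
    · have hφx : φ x = 0 := image_eq_zero_of_notMem_tsupport hx
      have hg0 := hgradφ0 x hx
      simp only [hPdef, hG₁def, hG₂def, hφx, hg0, norm_zero]
      norm_num
  -- integrate the pointwise bound
  have hm : ∫ x, 2 * (-(P x)) ≤ ∫ x, (((a-1)/2) * G₁ x + (2/(a-1)) * G₂ x) :=
    integral_mono ((hPint.neg).const_mul 2)
      ((hG₁int.const_mul _).add (hG₂int.const_mul _)) hpoint
  rw [integral_add (hG₁int.const_mul _) (hG₂int.const_mul _), integral_const_mul,
    integral_const_mul, integral_const_mul, integral_neg] at hm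
  -- fold the goal integrands
  have hgoal1 : (∫ x in ball (0 : EuclideanSpace ℝ (Fin (m+1))) r,
      |u x| ^ (a - 2) * ‖gradient u x‖ ^ 2 * (φ x) ^ 2) =
      ∫ x in ball (0 : EuclideanSpace ℝ (Fin (m+1))) r, G₁ x := by rw [hG₁def]
  have hgoal2 : (∫ x in ball (0 : EuclideanSpace ℝ (Fin (m+1))) r,
      |u x| ^ a * ‖gradient φ x‖ ^ 2) =
      ∫ x in ball (0 : EuclideanSpace ℝ (Fin (m+1))) r, G₂ x := by rw [hG₂def]
  rw [hgoal1, hgoal2]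
  -- identify the set integrals with the global ones
  have hIeq : ∫ x in ball (0 : EuclideanSpace ℝ (Fin (m+1))) r, G₁ x = ∫ x, G₁ x := by
    apply setIntegral_eq_integral_of_forall_compl_eq_zero
    intro x hx
    have : x ∉ tsupport φ := fun h => hx (hKr h)
    simp [hG₁def, image_eq_zero_of_notMem_tsupport this]
  have hJeq : ∫ x in ball (0 : EuclideanSpace ℝ (Fin (m+1))) r, G₂ x = ∫ x, G₂ x := by
    apply setIntegral_eq_integral_of_forall_compl_eq_zero
    intro x hx
    have : x ∉ tsupport φ := fun h => hx (hKr h)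
    simp [hG₂def, hgradφ0 x this]
  rw [hIeq, hJeq]
  -- final arithmetic
  obtain ⟨I, hIdef⟩ : ∃ I : ℝ, I = ∫ x, G₁ x := ⟨_, rfl⟩
  obtain ⟨J, hJdef⟩ : ∃ J : ℝ, J = ∫ x, G₂ x := ⟨_, rfl⟩
  rw [← hIdef, ← hJdef]
  rw [← hIdef, ← hJdef] at hm
  rw [← hIdef] at hsum
  have h4 : (a-1)/2 * I ≤ 2/(a-1) * J := by linarith
  have h5 := mul_le_mul_of_nonneg_left h4 (le_of_lt (by positivity : (0:ℝ) < (a-1)/2))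
  have h6 : (a-1)/2 * (2/(a-1) * J) = J := by
    field_simp
  calc ((a - 1) / 2) ^ 2 * I = (a-1)/2 * ((a-1)/2 * I) := by ring
    _ ≤ (a-1)/2 * (2/(a-1) * J) := h5
    _ = J := h6


/-- The Laplacian of `u : ℝⁿ → ℝ` at `x`, as the sum of second partial derivatives. -/
noncomputable def lapl {n : ℕ} (u : EuclideanSpace ℝ (Fin n) → ℝ)
    (x : EuclideanSpace ℝ (Fin n)) : ℝ :=
  ∑ i, fderiv ℝ (fun y => fderiv ℝ u y (EuclideanSpace.single i 1)) x (EuclideanSpace.single i 1)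

/-- `u` is harmonic on all of ℝⁿ: it is C² and its Laplacian vanishes identically. -/
def HarmonicFn {n : ℕ} (u : EuclideanSpace ℝ (Fin n) → ℝ) : Prop :=
  ContDiff ℝ 2 u ∧ ∀ x, lapl u x = 0

/-- `u` is harmonic on the (open) set `Ω`: it is C² on `Ω` and its Laplacian vanishes on `Ω`. -/
def HarmonicFnOn {n : ℕ} (u : EuclideanSpace ℝ (Fin n) → ℝ)
    (Ω : Set (EuclideanSpace ℝ (Fin n))) : Prop :=
  ContDiffOn ℝ 2 u Ω ∧ ∀ x ∈ Ω, lapl u x = 0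

/-- **The Hardy-type inequality (3.3)** (case A = Identity): for `u` harmonic on `B₁`,
`a > 1`, `r ∈ (0,1)` and every smooth `φ` compactly supported in `B_r ∖ Z(u)`,
`((a-1)/2)² ∫_{B_r} |u|^{a-2}|∇u|² φ² ≤ ∫_{B_r} |u|^a |∇φ|²`. -/
theorem hardy_type_inequality (n : ℕ)
    (u : EuclideanSpace ℝ (Fin n) → ℝ)
    (hu : HarmonicFnOn u (ball (0 : EuclideanSpace ℝ (Fin n)) 1))
    (a : ℝ) (ha : 1 < a) (r : ℝ) (hr : r ∈ Set.Ioo (0 : ℝ) 1)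
    (φ : EuclideanSpace ℝ (Fin n) → ℝ)
    (hφ : ContDiff ℝ (⊤ : ℕ∞) φ) (hφc : HasCompactSupport φ)
    (hφs : tsupport φ ⊆ ball (0 : EuclideanSpace ℝ (Fin n)) r \ {x | u x = 0}) :
    ((a - 1) / 2) ^ 2 *
        ∫ x in ball (0 : EuclideanSpace ℝ (Fin n)) r,
          |u x| ^ (a - 2) * ‖gradient u x‖ ^ 2 * (φ x) ^ 2 ≤
      ∫ x in ball (0 : EuclideanSpace ℝ (Fin n)) r, |u x| ^ a * ‖gradient φ x‖ ^ 2 := by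
  obtain ⟨hr0, hr1⟩ := hr
  match n, u, hu, φ, hφ, hφc, hφs with
  | 0, u, hu, φ, hφ, hφc, hφs =>
    have hsub : Subsingleton (EuclideanSpace ℝ (Fin 0)) :=
      ⟨fun x y => PiLp.ext fun i => i.elim0⟩
    have hgrad : ∀ (w : EuclideanSpace ℝ (Fin 0) → ℝ) x, gradient w x = 0 :=
      fun w x => @Subsingleton.elim _ hsub _ _
    simp only [hgrad, norm_zero]
    norm_num
  | (m + 1), u, hu, φ, hφ, hφc, hφs =>
    exact hardy_succ m u hu.1 (fun x hx => hu.2 x hx) a ha r hr0 hr1 φ hφ hφc hφs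
end

section
/- Let k ≥ 2 be an integer and let P : ℝ² → ℝ be the degree-k homogeneous harmonic polynomial P(x,y) = Re((x+iy)^k) (in polar coordinates, P(r,θ) = r^k cos(kθ)). Then for a ∈ ℝ, the integral ∫_{B₁} |P(x)|^a dx over the unit disc is finite if and only if a > −2/k. -/
/-!
In polar coordinates `z = r e^{iθ}` one has `|Re(z^k)|^a = r^{ka} |cos kθ|^a`, so the integral
over the unit disc factors as `(∫₀¹ r^{ka+1} dr) · (∫_{-π}^{π} |cos kθ|^a dθ)`.
The radial factor is finite iff `ka + 1 > -1`, i.e. `a > -2/k`. The angular factor is always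
positive, and it is finite for `a > -1` because `|cos|` vanishes only linearly (Jordan's
inequality); for `k ≥ 2` this is implied by `a > -2/k`.
-/

open MeasureTheory Metric Filter Set Real

theorem abs_cos_rpow_le {a : ℝ} (ha : a < 0) {t : ℝ} (h0 : 0 ≤ t) (h1 : t ≤ π / 2) :
    |cos t| ^ a ≤ (2 / π) ^ a * (π / 2 - t) ^ a := by
  rcases h1.lt_or_eq with h1 | rfl
  · have hpos : 0 < 2 / π * (π / 2 - t) := by have := pi_pos; field_simp; linarith
    have jordan : 2 / π * (π / 2 - t) ≤ |cos t| := by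
      rw [← sin_pi_div_two_sub]
      exact (mul_le_sin (by linarith) (by linarith)).trans (le_abs_self _)
    rw [← mul_rpow (by positivity) (by linarith)]
    exact rpow_le_rpow_of_nonpos hpos jordan ha.le
  · simp [zero_rpow ha.ne]

theorem intervalIntegrable_abs_cos_rpow {a : ℝ} (ha : -1 < a) (s t : ℝ) :
    IntervalIntegrable (fun t => |cos t| ^ a) volume s t := by
  have periodic : Function.Periodic (fun t => |cos t| ^ a) π := fun t => by
    simp [cos_add_pi]
  refine periodic.intervalIntegrable pi_ne_zero (t := -(π / 2)) ?_ s t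
  have half : IntervalIntegrable (fun t => |cos t| ^ a) volume 0 (π / 2) := by
    rcases le_or_gt 0 a with h0 | h0
    · have := (continuous_abs.comp continuous_cos).rpow_const fun _ => Or.inr h0
      exact this.intervalIntegrable _ _
    have dominant :
        IntervalIntegrable (fun t => (2 / π) ^ a * (π / 2 - t) ^ a) volume 0 (π / 2) := by
      have := intervalIntegral.intervalIntegrable_rpow' ha (a := π / 2) (b := 0)
      simpa using (this.comp_sub_left (π / 2)).const_mul ((2 / π) ^ a)
    refine dominant.mono_fun'
      ((continuous_abs.comp continuous_cos).measurable.pow_const a).aestronglyMeasurable ?_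
    rw [uIoc_of_le (by positivity), EventuallyLE, ae_restrict_iff' measurableSet_Ioc]
    filter_upwards with t ht
    rw [norm_of_nonneg (by positivity)]
    exact abs_cos_rpow_le h0 ht.1.le ht.2
  have := (IntervalIntegrable.iff_comp_neg (f := fun t => |cos t| ^ a)).mp half
  simp only [neg_zero, cos_neg] at this
  rw [show -(π / 2) + π = π / 2 by ring]
  exact this.symm.trans half

theorem intervalIntegrable_abs_cos_mul_rpow {a : ℝ} (ha : -1 < a) (c s t : ℝ) :
    IntervalIntegrable (fun θ => |cos (c * θ)| ^ a) volume s t := by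
  rcases eq_or_ne c 0 with rfl | hc
  · simp
  · simpa [hc] using (intervalIntegrable_abs_cos_rpow ha (c * s) (c * t)).comp_mul_left (c := c)

theorem lintegral_abs_cos_mul_rpow_pos {k : ℕ} (hk : k ≠ 0) (a : ℝ) :
    0 < ∫⁻ θ in Ioo (-π) π, ENNReal.ofReal (|cos (k * θ)| ^ a) := by
  have hk' : (1 : ℝ) ≤ k := Nat.one_le_cast.2 (Nat.one_le_iff_ne_zero.2 hk)
  set S := Ioo (-(π / 2 / k)) (π / 2 / k)
  have hS : S ⊆ Ioo (-π) π := by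
    have : π / 2 / k ≤ π := by
      rw [div_le_iff₀ (by positivity)]; nlinarith [pi_pos]
    exact Ioo_subset_Ioo (by linarith) (by linarith)
  have pos_on_S : ∀ θ ∈ S, 0 < ENNReal.ofReal (|cos (k * θ)| ^ a) := fun θ hθ => by
    have hkθ : k * θ ∈ Ioo (-(π / 2)) (π / 2) := by
      constructor
      · have := hθ.1; rw [neg_div', div_lt_iff₀ (by positivity)] at this; linarith
      · have := hθ.2; rw [lt_div_iff₀ (by positivity)] at this; linarith
    exact ENNReal.ofReal_pos.2 (rpow_pos_of_pos (abs_pos.2 (cos_pos_of_mem_Ioo hkθ).ne') a)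
  calc 0 < ∫⁻ θ in S, ENNReal.ofReal (|cos (k * θ)| ^ a) := by
        rw [setLIntegral_pos_iff (by fun_prop),
          inter_eq_right.2 fun θ hθ => Function.mem_support.2 (pos_on_S θ hθ).ne',
          volume_Ioo, ENNReal.ofReal_pos]
        have : 0 < π / 2 / k := by positivity
        linarith
    _ ≤ _ := lintegral_mono_set hS

theorem lintegral_abs_cos_mul_rpow_ne_top {a : ℝ} (ha : -1 < a) (c : ℝ) :
    ∫⁻ θ in Ioo (-π) π, ENNReal.ofReal (|cos (c * θ)| ^ a) ≠ ⊤ := by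
  rw [lintegral_ofReal_ne_top_iff_integrable (Measurable.aestronglyMeasurable (by fun_prop))
    (ae_of_all _ fun θ => by positivity), ← IntegrableOn,
    ← intervalIntegrable_iff_integrableOn_Ioo_of_le (by linarith [pi_pos])]
  exact intervalIntegrable_abs_cos_mul_rpow ha c (-π) π

theorem lintegral_Ioo_rpow_ne_top_iff {t : ℝ} (ht : 0 < t) (s : ℝ) :
    ∫⁻ r in Ioo 0 t, ENNReal.ofReal (r ^ s) ≠ ⊤ ↔ -1 < s := by
  rw [lintegral_ofReal_ne_top_iff_integrable (by fun_prop)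
    ((ae_restrict_iff' measurableSet_Ioo).2 (ae_of_all _ fun r hr => rpow_nonneg hr.1.le s))]
  exact intervalIntegral.integrableOn_Ioo_rpow_iff ht

theorem Complex.lintegral_ball_eq_lintegral_polarCoord (f : ℂ → ENNReal) (R : ℝ) :
    ∫⁻ z in ball 0 R, f z =
      ∫⁻ p in Ioo 0 R ×ˢ Ioo (-π) π, ENNReal.ofReal p.1 * f (Complex.polarCoord.symm p) := by
  rw [← lintegral_indicator measurableSet_ball, ← Complex.lintegral_comp_polarCoord_symm,
    polarCoord_target]
  have hset : Ioo 0 R ×ˢ Ioo (-π) π = (Iio R ×ˢ univ) ∩ (Ioi 0 ×ˢ Ioo (-π) π) := by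
    ext ⟨r, θ⟩; simp [and_assoc, and_comm, and_left_comm]
  rw [hset, ← Measure.restrict_restrict (measurableSet_Iio.prod MeasurableSet.univ),
    ← lintegral_indicator (measurableSet_Iio.prod MeasurableSet.univ)]
  refine setLIntegral_congr_fun (measurableSet_Ioi.prod measurableSet_Ioo) fun p hp => ?_
  have hr : 0 < p.1 := hp.1
  by_cases h : p.1 < R <;> simp [indicator, h, abs_of_pos hr]

theorem Complex.re_polarCoord_symm_pow (p : ℝ × ℝ) (k : ℕ) :
    ((Complex.polarCoord.symm p) ^ k).re = p.1 ^ k * Real.cos (k * p.2) := by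
  rw [Complex.polarCoord_symm_apply, mul_pow, Complex.ofReal_cos, Complex.ofReal_sin,
    Complex.cos_add_sin_mul_I_pow, ← Complex.ofReal_pow, Complex.re_ofReal_mul]
  norm_cast
  rw [Complex.add_re, Complex.ofReal_re, Complex.re_ofReal_mul, Complex.I_re, mul_zero, add_zero]

theorem mul_abs_pow_mul_rpow {r : ℝ} (hr : 0 < r) (k : ℕ) (a c : ℝ) :
    r * |r ^ k * c| ^ a = r ^ (k * a + 1) * |c| ^ a := by
  rw [abs_mul, abs_of_pos (pow_pos hr k), mul_rpow (by positivity) (abs_nonneg c),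
    ← rpow_natCast, ← rpow_mul hr.le, rpow_add_one hr.ne']
  ring

theorem lintegral_ball_abs_re_pow_rpow (k : ℕ) (a : ℝ) :
    ∫⁻ z in ball (0 : ℂ) 1, ENNReal.ofReal (|(z ^ k).re| ^ a) =
      (∫⁻ r in Ioo 0 1, ENNReal.ofReal (r ^ (k * a + 1))) *
        ∫⁻ θ in Ioo (-π) π, ENNReal.ofReal (|cos (k * θ)| ^ a) := by
  rw [Complex.lintegral_ball_eq_lintegral_polarCoord]
  calc _ = ∫⁻ p in Ioo 0 1 ×ˢ Ioo (-π) π,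
        ENNReal.ofReal (p.1 ^ (k * a + 1)) * ENNReal.ofReal (|cos (k * p.2)| ^ a) :=
        setLIntegral_congr_fun (measurableSet_Ioo.prod measurableSet_Ioo) fun p hp => by
          rw [Complex.re_polarCoord_symm_pow, ← ENNReal.ofReal_mul hp.1.1.le,
            mul_abs_pow_mul_rpow hp.1.1, ENNReal.ofReal_mul (rpow_nonneg hp.1.1.le _)]
    _ = _ := by
        rw [Measure.volume_eq_prod, ← Measure.prod_restrict]
        exact lintegral_prod_mul (f := fun r : ℝ => ENNReal.ofReal (r ^ ((k : ℝ) * a + 1)))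
          (g := fun θ => ENNReal.ofReal (|cos (k * θ)| ^ a)) (by fun_prop) (by fun_prop)

theorem integrableOn_ball_abs_re_pow_rpow_iff {k : ℕ} (hk : 2 ≤ k) (a : ℝ) :
    IntegrableOn (fun z : ℂ => |(z ^ k).re| ^ a) (ball 0 1) ↔ -2 / k < a := by
  have hk' : (2 : ℝ) ≤ k := by exact_mod_cast hk
  rw [IntegrableOn, ← lintegral_ofReal_ne_top_iff_integrable
    (Measurable.aestronglyMeasurable (by fun_prop)) (ae_of_all _ fun z => by positivity),
    lintegral_ball_abs_re_pow_rpow]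
  have radial : ∫⁻ r in Ioo 0 1, ENNReal.ofReal (r ^ (k * a + 1)) ≠ ⊤ ↔ -2 / k < a := by
    rw [lintegral_Ioo_rpow_ne_top_iff one_pos, div_lt_iff₀ (by positivity)]
    constructor <;> intro <;> linarith
  constructor
  · intro h
    refine radial.1 fun h_top => h ?_
    rw [h_top, ENNReal.top_mul (lintegral_abs_cos_mul_rpow_pos (by omega) a).ne']
  · intro ha
    have ha' : -1 < a := by
      have : -1 ≤ -2 / (k : ℝ) := by rw [le_div_iff₀ (by positivity)]; linarith
      linarith
    exact ENNReal.mul_ne_top (radial.2 ha) (lintegral_abs_cos_mul_rpow_ne_top ha' k)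

theorem integrableOn_ball_comp_euclideanSpace_iff (g : ℂ → ℝ) (R : ℝ) :
    IntegrableOn (fun x : EuclideanSpace ℝ (Fin 2) => g (x 0 + x 1 * Complex.I)) (ball 0 R) ↔
      IntegrableOn g (ball 0 R) := by
  have := Complex.orthonormalBasisOneI.measurePreserving_repr_symm.integrableOn_comp_preimage
    Complex.orthonormalBasisOneI.measurableEquiv.symm.measurableEmbedding (f := g) (s := ball 0 R)
  simpa [LinearIsometryEquiv.preimage_ball, Function.comp_def] using this

/-- **The two-dimensional model computation** in the proof of Lemma 3.1: for the degree-`k`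
homogeneous harmonic polynomial `P(x,y) = Re((x+iy)^k)` with `k ≥ 2`, the integral
`∫_{B₁} |P|^a` is finite if and only if `a > -2/k`. -/
theorem model_weight_integrability (k : ℕ) (hk : 2 ≤ k) (a : ℝ) :
    IntegrableOn
      (fun x : EuclideanSpace ℝ (Fin 2) =>
        |(((x 0 : ℂ) + (x 1 : ℂ) * Complex.I) ^ k).re| ^ a)
      (ball (0 : EuclideanSpace ℝ (Fin 2)) 1) ↔
    -2 / (k : ℝ) < a :=
  (integrableOn_ball_comp_euclideanSpace_iff (fun z => |(z ^ k).re| ^ a) 1).trans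
    (integrableOn_ball_abs_re_pow_rpow_iff hk a)
end
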